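/- Suppose E ∈ M(J, {n_k}, {φ_k}) is a Moran set with c_* = inf_{i,j} c_{i,j} > 0. Then dim_A E ≤ s** = lim_{m→∞} sup_k s_{k,k+m}, where s_{k,k'} solves ∏_{i=k+1}^{k'} ∑_{j=1}^{n_i} (c_{i,j})^s = 1. -/

import Mathlib

open Finset Set Metric

/-- A word `v` is valid starting at level `start`. -/
def ValidFrom (n : ℕ → ℕ) (start : ℕ) (v : List ℕ) : Prop :=
  ∀ i, i < v.length → v.getD i 0 < n (start + i)

/-- `wt c start v` : the ratio `c_v` of a word `v` starting at level `start`. -/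
noncomputable def wt (c : ℕ → ℕ → ℝ) (start : ℕ) (v : List ℕ) : ℝ :=
  ∏ i ∈ Finset.range v.length, c (start + i) (v.getD i 0)

/-- A Moran structure in `ℝ^d`: branching numbers `n k ≥ 2`, ratio vectors
`(c k 0, …, c k (n k - 1))` with `∑_j (c k j)^d ≤ 1`, and basic sets `J u`
satisfying the Moran structure conditions (MSC). -/
structure MoranSystem (d : ℕ) where
  n : ℕ → ℕ
  c : ℕ → ℕ → ℝ
  J : List ℕ → Set (EuclideanSpace ℝ (Fin d))
  hn : ∀ k, 2 ≤ n k
  hc : ∀ k j, j < n k → c k j ∈ Set.Ioo (0 : ℝ) 1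
  hsum : ∀ k, ∑ j ∈ Finset.range (n k), (c k j) ^ d ≤ 1
  hcompact : ∀ u, IsCompact (J u)
  hint : (interior (J [])).Nonempty
  hsimilar : ∀ u : List ℕ, ValidFrom n 0 u →
    ∃ (f : EuclideanSpace ℝ (Fin d) → EuclideanSpace ℝ (Fin d)) (r : ℝ), 0 < r ∧
      (∀ x y, dist (f x) (f y) = r * dist x y) ∧ J u = f '' J []
  hsubset : ∀ u : List ℕ, ∀ j, ValidFrom n 0 u → j < n u.length →
    J (u ++ [j]) ⊆ J u
  hdisj : ∀ u : List ℕ, ∀ j j', ValidFrom n 0 u → j < n u.length → j' < n u.length →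
    j ≠ j' → interior (J (u ++ [j])) ∩ interior (J (u ++ [j'])) = ∅
  hratio : ∀ u : List ℕ, ∀ j, ValidFrom n 0 u → j < n u.length →
    Metric.diam (J (u ++ [j])) = c u.length j * Metric.diam (J u)

/-- The Moran set `E = ⋂_k ⋃_{u ∈ D_k} J_u`. -/
def MoranSystem.moranSet {d : ℕ} (M : MoranSystem d) : Set (EuclideanSpace ℝ (Fin d)) :=
  ⋂ k : ℕ, ⋃ u ∈ {u : List ℕ | u.length = k ∧ ValidFrom M.n 0 u}, M.J u

/-- The smallest number of closed `r`-balls needed to cover `B(x,R) ∩ K` for any `x ∈ K`. -/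
noncomputable def coverNum {X : Type*} [MetricSpace X] (K : Set X) (r R : ℝ) : ℕ :=
  sInf {m : ℕ | ∀ x ∈ K, ∃ t : Finset X, t.card ≤ m ∧
    closedBall x R ∩ K ⊆ ⋃ y ∈ t, closedBall y r}

/-- The Assouad dimension of a subset of a metric space. -/
noncomputable def assouadDim {X : Type*} [MetricSpace X] (K : Set X) : ℝ :=
  sInf {α : ℝ | 0 ≤ α ∧ ∃ b C : ℝ, 0 < b ∧ 0 < C ∧ ∀ r R : ℝ, 0 < r → r < R → R < b →
    (coverNum K r R : ℝ) ≤ C * (R / r) ^ α}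

/-!
Cut the tree of cylinders at scale `t` along the stopping words: the first cylinders of diameter
at most `t`. Each cylinder contains, by similarity with `J []`, an interior ball of radius
comparable to its diameter, so a ball of radius `R` meets boundedly many stopping cylinders at
scale `R` (volume packing). Below such a cylinder `J u` with `|u| = k + 1`, the stopping cylinders
at scale `r` are `J (u ++ v)` with `c_v > c_* r / R`; by the equation defining `s_{k,k+ℓ}` there
are at most `(c_* r / R) ^ (-s_{k,k+ℓ})` of them of each length `ℓ`, and `s_{k,k+ℓ} ≤ s** + ε`
once `ℓ` is large, while the finitely many short lengths cost a constant because
`n_k ≤ c_* ^ (-d)`. All ratios are at most some `c^* < 1`, so only `O((R / r) ^ ε)` lengths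
occur, and `B(x, R) ∩ E` is covered by `O((R / r) ^ (s** + 2ε))` balls of radius `r`.
-/

theorem List.exists_eq_append_cons_of_not_prefix {α : Type*} :
    ∀ u v : List α, ¬u <+: v → ¬v <+: u →
      ∃ p j j' t t', j ≠ j' ∧ u = p ++ j :: t ∧ v = p ++ j' :: t'
  | [], _, h, _ => absurd List.nil_prefix h
  | _, [], _, h => absurd List.nil_prefix h
  | a :: u, b :: v, h₁, h₂ => by
    rcases eq_or_ne a b with rfl | hab
    · obtain ⟨p, j, j', t, t', hjj', rfl, rfl⟩ := List.exists_eq_append_cons_of_not_prefix u v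
        (fun h => h₁ (List.cons_prefix_cons.mpr ⟨rfl, h⟩))
        (fun h => h₂ (List.cons_prefix_cons.mpr ⟨rfl, h⟩))
      exact ⟨a :: p, j, j', t, t', hjj', rfl, rfl⟩
    · exact ⟨[], a, b, u, v, hab, rfl, rfl⟩

section Words

variable (n : ℕ → ℕ)

theorem validFrom_append {st : ℕ} {u v : List ℕ} :
    ValidFrom n st (u ++ v) ↔ ValidFrom n st u ∧ ValidFrom n (st + u.length) v := by
  constructor
  · intro h
    refine ⟨fun i hi => ?_, fun i hi => ?_⟩
    · have := h i (by simp; omega)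
      rwa [List.getD_append _ _ _ _ hi] at this
    · have := h (u.length + i) (by simp; omega)
      rwa [List.getD_append_right _ _ _ _ (by omega), Nat.add_sub_cancel_left,
        ← Nat.add_assoc] at this
  · rintro ⟨hu, hv⟩ i hi
    rcases lt_or_ge i u.length with h | h
    · rw [List.getD_append _ _ _ _ h]
      exact hu i h
    · rw [List.getD_append_right _ _ _ _ h]
      simpa [Nat.add_assoc, Nat.add_sub_cancel' h] using hv (i - u.length) (by simp at hi; omega)

theorem validFrom_of_prefix {st : ℕ} {u w : List ℕ} (h : u <+: w) (hw : ValidFrom n st w) :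
    ValidFrom n st u := by
  obtain ⟨t, rfl⟩ := h
  exact ((validFrom_append n).mp hw).1

theorem validFrom_append_singleton {st j : ℕ} {u : List ℕ} :
    ValidFrom n st (u ++ [j]) ↔ ValidFrom n st u ∧ j < n (st + u.length) := by
  rw [validFrom_append]
  refine and_congr_right fun _ => ⟨fun h => by simpa using h 0 (by simp), fun h i hi => ?_⟩
  obtain rfl : i = 0 := by simpa using hi
  simpa using h

def validWords (st : ℕ) : ℕ → Finset (List ℕ)
  | 0 => {[]}
  | ℓ + 1 => (validWords st ℓ).biUnion fun u => (range (n (st + ℓ))).image fun j => u ++ [j]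

theorem mem_validWords {st ℓ : ℕ} {v : List ℕ} :
    v ∈ validWords n st ℓ ↔ v.length = ℓ ∧ ValidFrom n st v := by
  induction ℓ generalizing v with
  | zero =>
    simp only [validWords, Finset.mem_singleton, List.length_eq_zero_iff]
    exact ⟨fun h => ⟨h, h ▸ fun i hi => absurd hi (by simp)⟩, And.left⟩
  | succ ℓ ih =>
    simp only [validWords, Finset.mem_biUnion, Finset.mem_image, Finset.mem_range, ih]
    constructor
    · rintro ⟨u, ⟨rfl, hu⟩, j, hj, rfl⟩
      exact ⟨by simp, (validFrom_append_singleton n).mpr ⟨hu, hj⟩⟩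
    · rintro ⟨hl, hv⟩
      have hne : v ≠ [] := by rintro rfl; simp at hl
      rw [← List.dropLast_append_getLast hne, validFrom_append_singleton] at hv
      exact ⟨v.dropLast, ⟨by simp [hl], hv.1⟩, v.getLast hne, by simpa [hl] using hv.2,
        List.dropLast_append_getLast hne⟩

theorem wt_append (c : ℕ → ℕ → ℝ) {st : ℕ} (u v : List ℕ) :
    wt c st (u ++ v) = wt c st u * wt c (st + u.length) v := by
  unfold wt
  rw [List.length_append, Finset.prod_range_add]
  congr 1
  · exact Finset.prod_congr rfl fun i hi => by
      rw [List.getD_append _ _ _ _ (Finset.mem_range.mp hi)]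
  · exact Finset.prod_congr rfl fun i _ => by
      rw [List.getD_append_right _ _ _ _ (by omega), Nat.add_sub_cancel_left, Nat.add_assoc]

theorem wt_singleton (c : ℕ → ℕ → ℝ) (st j : ℕ) : wt c st [j] = c st j := by
  simp [wt]

theorem sum_validWords_wt_rpow (c : ℕ → ℕ → ℝ) (hc : ∀ k j, j < n k → 0 ≤ c k j)
    (st : ℕ) (s : ℝ) (ℓ : ℕ) :
    ∑ v ∈ validWords n st ℓ, wt c st v ^ s
      = ∏ i ∈ range ℓ, ∑ j ∈ range (n (st + i)), c (st + i) j ^ s := by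
  induction ℓ with
  | zero => simp [validWords, wt]
  | succ ℓ ih =>
    rw [validWords, Finset.sum_biUnion, Finset.prod_range_succ, ← ih, Finset.sum_mul]
    · refine Finset.sum_congr rfl fun u hu => ?_
      obtain ⟨rfl, hvalid⟩ := (mem_validWords n).mp hu
      rw [Finset.sum_image (by simp), Finset.mul_sum]
      refine Finset.sum_congr rfl fun j hj => ?_
      have hwt : 0 ≤ wt c st u :=
        Finset.prod_nonneg fun i hi => hc _ _ (hvalid i (Finset.mem_range.mp hi))
      rw [wt_append, wt_singleton, Real.mul_rpow hwt (hc _ _ (by simpa using hj))]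
    · intro a _ b _ hab
      simp only [Function.onFun, Finset.disjoint_left, Finset.mem_image]
      rintro _ ⟨j, _, rfl⟩ ⟨j', _, h⟩
      exact hab (List.append_inj_left' h rfl).symm

theorem card_validWords (st ℓ : ℕ) :
    (validWords n st ℓ).card = ∏ i ∈ range ℓ, n (st + i) := by
  have h : ((validWords n st ℓ).card : ℝ) = ∏ i ∈ range ℓ, (n (st + i) : ℝ) := by
    simpa using sum_validWords_wt_rpow n (fun _ _ => 1) (fun _ _ _ => zero_le_one) st 0 ℓ
  exact_mod_cast h

end Words

section Similarity

open scoped Pointwise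

variable {E : Type*} [NormedAddCommGroup E] [NormedSpace ℝ E] {f : E → E} {r : ℝ}

theorem isometry_inv_smul_of_dist_eq_mul (hr : 0 < r)
    (hf : ∀ x y, dist (f x) (f y) = r * dist x y) : Isometry fun x => r⁻¹ • f x :=
  Isometry.of_dist_eq fun x y => by
    rw [dist_smul₀, hf, Real.norm_of_nonneg (inv_nonneg.mpr hr.le), inv_mul_cancel_left₀ hr.ne']

theorem diam_image_of_dist_eq_mul (hr : 0 < r) (hf : ∀ x y, dist (f x) (f y) = r * dist x y)
    (A : Set E) : diam (f '' A) = r * diam A := by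
  have hfg : f '' A = r • (fun x => r⁻¹ • f x) '' A := by
    rw [← Set.image_smul, Set.image_image]
    simp [smul_smul, mul_inv_cancel₀ hr.ne']
  rw [hfg, diam_smul₀, (isometry_inv_smul_of_dist_eq_mul hr hf).diam_image,
    Real.norm_of_nonneg hr.le]

/-- By Mazur–Ulam, `r⁻¹ • f` is an affine isometry, hence onto in finite dimension. -/
theorem surjective_of_dist_eq_mul [StrictConvexSpace ℝ E] [FiniteDimensional ℝ E] (hr : 0 < r)
    (hf : ∀ x y, dist (f x) (f y) = r * dist x y) : Function.Surjective f := by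
  have : Inhabited E := ⟨0⟩
  have hg := ((isometry_inv_smul_of_dist_eq_mul hr hf).affineIsometryOfStrictConvexSpace
    |>.toAffineIsometryEquiv rfl).surjective
  intro y
  obtain ⟨x, hx⟩ := hg (r⁻¹ • y)
  refine ⟨x, ?_⟩
  simpa [smul_right_injective E (inv_ne_zero hr.ne') |>.eq_iff] using hx

theorem image_ball_of_dist_eq_mul [StrictConvexSpace ℝ E] [FiniteDimensional ℝ E] (hr : 0 < r)
    (hf : ∀ x y, dist (f x) (f y) = r * dist x y) (z : E) (ρ : ℝ) :
    f '' ball z ρ = ball (f z) (r * ρ) := by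
  ext y
  obtain ⟨x, rfl⟩ := surjective_of_dist_eq_mul hr hf y
  simp only [Set.mem_image, mem_ball]
  constructor
  · rintro ⟨x', hx', hx'x⟩
    rw [← hx'x, hf, mul_lt_mul_iff_right₀ hr]
    exact hx'
  · intro hx
    rw [hf, mul_lt_mul_iff_right₀ hr] at hx
    exact ⟨x, hx, rfl⟩

end Similarity

/-- Bernoulli's inequality for `c ^ (-ε)`: only `O(δ ^ (-ε))` lengths `ℓ` have `δ < c ^ ℓ`. -/
theorem nat_mul_rpow_neg_sub_one_lt {c δ ε : ℝ} (hc : 0 < c) (hδ : 0 < δ) (hε : 0 < ε) {ℓ : ℕ}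
    (h : δ < c ^ ℓ) : ℓ * (c ^ (-ε) - 1) < δ ^ (-ε) :=
  calc ℓ * (c ^ (-ε) - 1) < 1 + ℓ * (c ^ (-ε) - 1) := lt_one_add _
    _ ≤ (c ^ (-ε)) ^ ℓ := one_add_mul_sub_le_pow (by linarith [Real.rpow_pos_of_pos hc (-ε)]) ℓ
    _ = (c ^ ℓ) ^ (-ε) := Real.rpow_pow_comm hc.le _ _
    _ < δ ^ (-ε) := Real.rpow_lt_rpow_of_neg hδ h (neg_neg_of_pos hε)

section Packing

open MeasureTheory Module
open scoped ENNReal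

variable {E : Type*} [NormedAddCommGroup E] [NormedSpace ℝ E] [FiniteDimensional ℝ E]

theorem card_mul_pow_le_of_pairwiseDisjoint_ball {ι : Type*} {T : Finset ι} {y : ι → E} {x : E}
    {δ R : ℝ} (hδ : 0 < δ) (hR : 0 < R)
    (hdisj : (T : Set ι).PairwiseDisjoint fun i => ball (y i) δ)
    (hsub : ∀ i ∈ T, ball (y i) δ ⊆ ball x R) :
    T.card * δ ^ finrank ℝ E ≤ R ^ finrank ℝ E := by
  borelize E
  set μ : Measure E := Measure.addHaar
  have hμ0 : μ (ball 0 1) ≠ 0 := (measure_ball_pos μ _ one_pos).ne'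
  have hμ : μ (ball 0 1) ≠ ⊤ := measure_ball_lt_top.ne
  have hvol : (T.card : ℝ≥0∞) * (ENNReal.ofReal (δ ^ finrank ℝ E) * μ (ball 0 1))
      ≤ ENNReal.ofReal (R ^ finrank ℝ E) * μ (ball 0 1) := by
    calc (T.card : ℝ≥0∞) * (ENNReal.ofReal (δ ^ finrank ℝ E) * μ (ball 0 1))
        = ∑ i ∈ T, μ (ball (y i) δ) := by simp [Measure.addHaar_ball_of_pos μ _ hδ]
      _ = μ (⋃ i ∈ T, ball (y i) δ) :=
        (measure_biUnion_finset hdisj fun _ _ => measurableSet_ball).symm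
      _ ≤ μ (ball x R) := measure_mono (Set.iUnion₂_subset hsub)
      _ = ENNReal.ofReal (R ^ finrank ℝ E) * μ (ball 0 1) := Measure.addHaar_ball_of_pos μ _ hR
  rw [← mul_assoc, ENNReal.mul_le_mul_iff_left hμ0 hμ, ← ENNReal.ofReal_natCast,
    ← ENNReal.ofReal_mul (by positivity), ENNReal.ofReal_le_ofReal_iff (by positivity)] at hvol
  exact hvol

end Packing

namespace MoranSystem

variable {d : ℕ} (M : MoranSystem d)

theorem wt_nonneg {st : ℕ} {v : List ℕ} (hv : ValidFrom M.n st v) : 0 ≤ wt M.c st v :=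
  Finset.prod_nonneg fun i hi => (M.hc _ _ (hv i (Finset.mem_range.mp hi))).1.le

theorem wt_le_pow {cmax : ℝ} (hmax : ∀ k j, j < M.n k → M.c k j ≤ cmax) {st : ℕ}
    {v : List ℕ} (hv : ValidFrom M.n st v) : wt M.c st v ≤ cmax ^ v.length := by
  simpa [wt] using Finset.prod_le_prod (fun i hi => (M.hc _ _ (hv i (Finset.mem_range.mp hi))).1.le)
    fun i hi => hmax _ _ (hv i (Finset.mem_range.mp hi))

theorem n_le_inv_pow {cmin : ℝ} (hcmin : 0 < cmin) (hmin : ∀ k j, j < M.n k → cmin ≤ M.c k j)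
    (k : ℕ) : (M.n k : ℝ) ≤ (cmin ^ d)⁻¹ := by
  rw [← one_div, le_div_iff₀ (by positivity)]
  calc (M.n k : ℝ) * cmin ^ d = ∑ _j ∈ range (M.n k), cmin ^ d := by simp
    _ ≤ ∑ j ∈ range (M.n k), M.c k j ^ d :=
      Finset.sum_le_sum fun j hj => pow_le_pow_left₀ hcmin.le (hmin k j (by simpa using hj)) d
    _ ≤ 1 := M.hsum k

/-- A ratio `c k j` shares the budget `∑ j, (c k j) ^ d ≤ 1` with at least one sibling, which is
at least `cmin`; hence all ratios are bounded by `(1 - cmin ^ d) ^ (1 / d) < 1`. -/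
theorem exists_c_le_lt_one (hd : 1 ≤ d) {cmin : ℝ} (hcmin : 0 < cmin)
    (hmin : ∀ k j, j < M.n k → cmin ≤ M.c k j) :
    ∃ cmax : ℝ, 0 < cmax ∧ cmax < 1 ∧ ∀ k j, j < M.n k → M.c k j ≤ cmax := by
  have h2 := M.hn 0
  have hcmin1 : cmin < 1 := (hmin 0 0 (by omega)).trans_lt (M.hc 0 0 (by omega)).2
  have hpos : 0 < 1 - cmin ^ d := sub_pos.mpr (pow_lt_one₀ hcmin.le hcmin1 (by omega))
  refine ⟨(1 - cmin ^ d) ^ (1 / (d : ℝ)), by positivity,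
    Real.rpow_lt_one hpos.le (by linarith [pow_pos hcmin d]) (by positivity), fun k j hj => ?_⟩
  obtain ⟨j', hj', hjj'⟩ : ∃ j' < M.n k, j' ≠ j := by
    have := M.hn k
    rcases eq_or_ne j 0 with rfl | hj0
    · exact ⟨1, by omega, one_ne_zero⟩
    · exact ⟨0, by omega, hj0.symm⟩
  have hpair : M.c k j ^ d + M.c k j' ^ d ≤ 1 := by
    refine le_trans ?_ (M.hsum k)
    rw [← Finset.sum_pair (f := fun i => M.c k i ^ d) hjj'.symm]
    refine Finset.sum_le_sum_of_subset_of_nonneg ?_ fun i hi _ =>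
      pow_nonneg (M.hc k i (Finset.mem_range.mp hi)).1.le d
    simp [Finset.insert_subset_iff, hj, hj']
  have hle : M.c k j ^ d ≤ 1 - cmin ^ d := by
    linarith [pow_le_pow_left₀ hcmin.le (hmin k j' hj') d]
  rw [← Real.rpow_le_rpow_iff (M.hc k j hj).1.le (by positivity) (by positivity : (0 : ℝ) < d),
    ← Real.rpow_mul hpos.le, one_div_mul_cancel (by positivity), Real.rpow_one]
  exact_mod_cast hle

theorem J_subset_of_prefix {u w : List ℕ} (h : u <+: w) (hw : ValidFrom M.n 0 w) :
    M.J w ⊆ M.J u := by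
  induction w using List.reverseRecOn with
  | nil => rw [List.prefix_nil.mp h]
  | append_singleton w j ih =>
    rcases (List.prefix_concat_iff.mp h) with rfl | hu
    · exact subset_rfl
    · obtain ⟨hw, hj⟩ := (validFrom_append_singleton M.n).mp hw
      rw [zero_add] at hj
      exact (M.hsubset w j hw hj).trans (ih hu hw)

theorem diam_J {u : List ℕ} (hu : ValidFrom M.n 0 u) :
    diam (M.J u) = wt M.c 0 u * diam (M.J []) := by
  induction u using List.reverseRecOn with
  | nil => simp [wt]
  | append_singleton w j ih =>
    obtain ⟨hw, hj⟩ := (validFrom_append_singleton M.n).mp hu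
    rw [zero_add] at hj
    rw [M.hratio w j hw hj, ih hw, wt_append, zero_add, wt_singleton]
    ring

theorem J_nonempty {u : List ℕ} (hu : ValidFrom M.n 0 u) : (M.J u).Nonempty := by
  obtain ⟨f, -, -, -, hJ⟩ := M.hsimilar u hu
  exact hJ ▸ (M.hint.mono interior_subset).image f

theorem diam_J_nil_pos (hd : 1 ≤ d) : 0 < diam (M.J []) := by
  have : Nonempty (Fin d) := ⟨⟨0, hd⟩⟩
  obtain ⟨z, hz⟩ := M.hint
  exact diam_pos (infinite_of_mem_nhds z (mem_interior_iff_mem_nhds.mp hz)).nontrivial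
    (M.hcompact []).isBounded

theorem interior_J_inter_interior_J {u v : List ℕ} (hu : ValidFrom M.n 0 u)
    (hv : ValidFrom M.n 0 v) (huv : ¬u <+: v) (hvu : ¬v <+: u) :
    interior (M.J u) ∩ interior (M.J v) = ∅ := by
  obtain ⟨p, j, j', t, t', hjj', rfl, rfl⟩ := List.exists_eq_append_cons_of_not_prefix u v huv hvu
  have hpj : p ++ [j] <+: p ++ j :: t := ⟨t, by simp⟩
  have hpj' : p ++ [j'] <+: p ++ j' :: t' := ⟨t', by simp⟩
  obtain ⟨hp, hj⟩ := (validFrom_append_singleton M.n).mp (validFrom_of_prefix M.n hpj hu)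
  have hj' := ((validFrom_append_singleton M.n).mp (validFrom_of_prefix M.n hpj' hv)).2
  rw [zero_add] at hj hj'
  refine Set.subset_empty_iff.mp ((Set.inter_subset_inter ?_ ?_).trans
    (M.hdisj p j j' hp hj hj' hjj').subset)
  · exact interior_mono (M.J_subset_of_prefix hpj hu)
  · exact interior_mono (M.J_subset_of_prefix hpj' hv)

theorem exists_ball_subset_interior_J (hd : 1 ≤ d) {z : EuclideanSpace ℝ (Fin d)} {ρ : ℝ}
    (hball : ball z ρ ⊆ interior (M.J [])) {u : List ℕ} (hu : ValidFrom M.n 0 u) :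
    ∃ y, ball y (wt M.c 0 u * ρ) ⊆ interior (M.J u) := by
  obtain ⟨f, r, hr, hf, hJ⟩ := M.hsimilar u hu
  have hrw : r = wt M.c 0 u := by
    have := M.diam_J hu
    rw [hJ, diam_image_of_dist_eq_mul hr hf] at this
    exact mul_right_cancel₀ (M.diam_J_nil_pos hd).ne' this
  refine ⟨f z, ?_⟩
  rw [← hrw, ← image_ball_of_dist_eq_mul hr hf, hJ]
  refine interior_maximal (Set.image_mono (hball.trans interior_subset)) ?_
  rw [image_ball_of_dist_eq_mul hr hf]
  exact isOpen_ball

theorem diam_J_append {u v : List ℕ} (h : ValidFrom M.n 0 (u ++ v)) :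
    diam (M.J (u ++ v)) = wt M.c u.length v * diam (M.J u) := by
  rw [M.diam_J h, M.diam_J ((validFrom_append M.n).mp h).1, wt_append, zero_add]
  ring

theorem card_validWords_le {cmin : ℝ} (hcmin : 0 < cmin)
    (hmin : ∀ k j, j < M.n k → cmin ≤ M.c k j) (st ℓ : ℕ) :
    ((validWords M.n st ℓ).card : ℝ) ≤ (cmin ^ d)⁻¹ ^ ℓ := by
  rw [card_validWords, Nat.cast_prod]
  simpa using Finset.prod_le_prod (fun _ _ => Nat.cast_nonneg _)
    fun i (_ : i ∈ Finset.range ℓ) => M.n_le_inv_pow hcmin hmin (st + i)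

theorem card_mul_rpow_le_prod {st ℓ : ℕ} {s δ : ℝ} (hs : 0 ≤ s) (hδ : 0 ≤ δ)
    {V : Finset (List ℕ)} (hV : ∀ v ∈ V, v.length = ℓ ∧ ValidFrom M.n st v ∧ δ ≤ wt M.c st v) :
    V.card * δ ^ s ≤ ∏ i ∈ range ℓ, ∑ j ∈ range (M.n (st + i)), M.c (st + i) j ^ s := by
  have hsub : V ⊆ validWords M.n st ℓ := fun v hv =>
    (mem_validWords M.n).mpr ⟨(hV v hv).1, (hV v hv).2.1⟩
  rw [← sum_validWords_wt_rpow M.n M.c (fun k j h => (M.hc k j h).1.le)]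
  calc V.card * δ ^ s = ∑ _v ∈ V, δ ^ s := by simp
    _ ≤ ∑ v ∈ V, wt M.c st v ^ s :=
      Finset.sum_le_sum fun v hv => Real.rpow_le_rpow hδ (hV v hv).2.2 hs
    _ ≤ ∑ v ∈ validWords M.n st ℓ, wt M.c st v ^ s :=
      Finset.sum_le_sum_of_subset_of_nonneg hsub fun v hv _ => Real.rpow_nonneg
        (M.wt_nonneg ((mem_validWords M.n).mp hv).2) s

theorem card_le_rpow_neg_of_solution {s : ℝ} (hs : 0 < s) {k ℓ : ℕ}
    (hsol : ∏ i ∈ Ioc k (k + ℓ), ∑ j ∈ range (M.n i), M.c i j ^ s = 1) {δ : ℝ} (hδ : 0 < δ)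
    {V : Finset (List ℕ)}
    (hV : ∀ v ∈ V, v.length = ℓ ∧ ValidFrom M.n (k + 1) v ∧ δ ≤ wt M.c (k + 1) v) :
    (V.card : ℝ) ≤ δ ^ (-s) := by
  have hprod : ∏ i ∈ range ℓ, ∑ j ∈ range (M.n (k + 1 + i)), M.c (k + 1 + i) j ^ s = 1 := by
    rw [← hsol, ← Finset.Ico_add_one_add_one_eq_Ioc, Finset.prod_Ico_eq_prod_range]
    simp [Nat.add_right_comm]
  rw [Real.rpow_neg hδ.le, ← one_div, le_div_iff₀ (by positivity)]
  simpa [hprod] using M.card_mul_rpow_le_prod hs.le hδ.le hV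

/-- Long words are counted with the solution exponents `s k (k + ℓ) ≤ s₀`; the finitely many
short lengths `ℓ < L` only cost the constant `(cmin ^ d)⁻¹ ^ L`, a bound on the branching. -/
theorem card_le_of_length_eq {cmin : ℝ} (hcmin : 0 < cmin)
    (hmin : ∀ k j, j < M.n k → cmin ≤ M.c k j) (s : ℕ → ℕ → ℝ)
    (hsol : ∀ k k', k < k' → ∏ i ∈ Ioc k k', ∑ j ∈ range (M.n i), M.c i j ^ s k k' = 1)
    (hspos : ∀ k k', k < k' → 0 < s k k') {s₀ : ℝ} (hs₀ : 0 ≤ s₀) {L : ℕ}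
    (hL : ∀ k ℓ, L ≤ ℓ → s k (k + ℓ) ≤ s₀) {k ℓ : ℕ} (hℓ : 1 ≤ ℓ) {δ : ℝ} (hδ : 0 < δ)
    (hδ1 : δ ≤ 1) {V : Finset (List ℕ)}
    (hV : ∀ v ∈ V, v.length = ℓ ∧ ValidFrom M.n (k + 1) v ∧ δ ≤ wt M.c (k + 1) v) :
    (V.card : ℝ) ≤ (cmin ^ d)⁻¹ ^ L * δ ^ (-s₀) := by
  have hB : 1 ≤ (cmin ^ d)⁻¹ :=
    (Nat.one_le_cast.mpr (by linarith [M.hn 0])).trans (M.n_le_inv_pow hcmin hmin 0)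
  have hδs₀ : 1 ≤ δ ^ (-s₀) := Real.one_le_rpow_of_pos_of_le_one_of_nonpos hδ hδ1 (by linarith)
  rcases lt_or_ge ℓ L with hℓL | hℓL
  · have hsub : V ⊆ validWords M.n (k + 1) ℓ := fun v hv =>
      (mem_validWords M.n).mpr ⟨(hV v hv).1, (hV v hv).2.1⟩
    calc (V.card : ℝ) ≤ (validWords M.n (k + 1) ℓ).card := by
          exact_mod_cast Finset.card_le_card hsub
      _ ≤ (cmin ^ d)⁻¹ ^ ℓ := M.card_validWords_le hcmin hmin _ _
      _ ≤ (cmin ^ d)⁻¹ ^ L := pow_le_pow_right₀ hB hℓL.le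
      _ ≤ (cmin ^ d)⁻¹ ^ L * δ ^ (-s₀) := le_mul_of_one_le_right (by positivity) hδs₀
  · calc (V.card : ℝ) ≤ δ ^ (-s k (k + ℓ)) :=
          M.card_le_rpow_neg_of_solution (hspos _ _ (by omega)) (hsol _ _ (by omega)) hδ hV
      _ ≤ δ ^ (-s₀) := Real.rpow_le_rpow_of_exponent_ge hδ hδ1 (by linarith [hL k ℓ hℓL])
      _ ≤ (cmin ^ d)⁻¹ ^ L * δ ^ (-s₀) :=
          le_mul_of_one_le_left (by positivity) (one_le_pow₀ hB)

/-- At most `δ ^ (-ε) / (cmax ^ (-ε) - 1)` lengths occur (`nat_mul_rpow_neg_sub_one_lt`), each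
with at most `(cmin ^ d)⁻¹ ^ L * δ ^ (-s₀)` words. -/
theorem card_le_of_lt_wt {cmin cmax : ℝ} (hcmin : 0 < cmin)
    (hmin : ∀ k j, j < M.n k → cmin ≤ M.c k j) (hcmax : 0 < cmax) (hcmax1 : cmax < 1)
    (hmax : ∀ k j, j < M.n k → M.c k j ≤ cmax) (s : ℕ → ℕ → ℝ)
    (hsol : ∀ k k', k < k' → ∏ i ∈ Ioc k k', ∑ j ∈ range (M.n i), M.c i j ^ s k k' = 1)
    (hspos : ∀ k k', k < k' → 0 < s k k') {s₀ : ℝ} (hs₀ : 0 ≤ s₀) {L : ℕ}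
    (hL : ∀ k ℓ, L ≤ ℓ → s k (k + ℓ) ≤ s₀) {ε : ℝ} (hε : 0 < ε) {k : ℕ} {δ : ℝ} (hδ : 0 < δ)
    {V : Finset (List ℕ)}
    (hV : ∀ v ∈ V, v ≠ [] ∧ ValidFrom M.n (k + 1) v ∧ δ < wt M.c (k + 1) v) :
    (V.card : ℝ) ≤ (cmin ^ d)⁻¹ ^ L / (cmax ^ (-ε) - 1) * δ ^ (-(s₀ + ε)) := by
  have hq : 0 < cmax ^ (-ε) - 1 :=
    sub_pos.mpr (Real.one_lt_rpow_of_pos_of_lt_one_of_neg hcmax hcmax1 (neg_neg_of_pos hε))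
  rcases V.eq_empty_or_nonempty with rfl | ⟨v₀, hv₀⟩
  · simp only [Finset.card_empty, Nat.cast_zero]
    positivity
  have hδ1 : δ ≤ 1 := (hV v₀ hv₀).2.2.le.trans
    ((M.wt_le_pow hmax (hV v₀ hv₀).2.1).trans (pow_le_one₀ hcmax.le hcmax1.le))
  set N := ⌊δ ^ (-ε) / (cmax ^ (-ε) - 1)⌋₊
  have hlen : ∀ v ∈ V, v.length ∈ Finset.Icc 1 N := fun v hv => by
    obtain ⟨hne, hvalid, hwt⟩ := hV v hv
    refine Finset.mem_Icc.mpr ⟨List.length_pos_iff.mpr hne, Nat.le_floor ?_⟩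
    rw [le_div_iff₀ hq]
    exact (nat_mul_rpow_neg_sub_one_lt hcmax hδ hε (hwt.trans_le (M.wt_le_pow hmax hvalid))).le
  calc (V.card : ℝ) = ∑ ℓ ∈ Finset.Icc 1 N, ((V.filter (·.length = ℓ)).card : ℝ) := by
        exact_mod_cast card_eq_sum_card_fiberwise hlen
    _ ≤ ∑ _ℓ ∈ Finset.Icc 1 N, (cmin ^ d)⁻¹ ^ L * δ ^ (-s₀) := by
        refine sum_le_sum fun ℓ hℓ => M.card_le_of_length_eq hcmin hmin s hsol hspos hs₀ hL (k := k)
          (Finset.mem_Icc.mp hℓ).1 hδ hδ1 fun v hv => ?_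
        obtain ⟨hvV, rfl⟩ := mem_filter.mp hv
        exact ⟨rfl, (hV v hvV).2.1, (hV v hvV).2.2.le⟩
    _ = N * ((cmin ^ d)⁻¹ ^ L * δ ^ (-s₀)) := by simp
    _ ≤ δ ^ (-ε) / (cmax ^ (-ε) - 1) * ((cmin ^ d)⁻¹ ^ L * δ ^ (-s₀)) :=
        mul_le_mul_of_nonneg_right (Nat.floor_le (by positivity)) (by positivity)
    _ = (cmin ^ d)⁻¹ ^ L / (cmax ^ (-ε) - 1) * δ ^ (-(s₀ + ε)) := by
        rw [neg_add, Real.rpow_add hδ]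
        ring

def IsStopping (t : ℝ) (w : List ℕ) : Prop :=
  ValidFrom M.n 0 w ∧ diam (M.J w) ≤ t ∧ t < diam (M.J w.dropLast)

variable {M}

theorem IsStopping.ne_nil {t : ℝ} {w : List ℕ} (h : M.IsStopping t w) : w ≠ [] := by
  rintro rfl
  exact (h.2.1.trans_lt h.2.2).false

theorem IsStopping.not_prefix {t : ℝ} {w w' : List ℕ} (h : M.IsStopping t w)
    (h' : M.IsStopping t w') (hne : w ≠ w') : ¬w <+: w' := by
  rintro ⟨v, rfl⟩
  obtain ⟨a, v, rfl⟩ := List.exists_cons_of_ne_nil (show v ≠ [] by rintro rfl; simp at hne)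
  have hpre : w <+: (w ++ a :: v).dropLast := by
    rw [List.dropLast_append_cons]
    exact List.prefix_append _ _
  have hsub := M.J_subset_of_prefix hpre (validFrom_of_prefix M.n (List.dropLast_prefix _) h'.1)
  exact (h'.2.2.trans_le ((diam_mono hsub (M.hcompact w).isBounded).trans h.2.1)).false

theorem IsStopping.mul_lt_diam {cmin : ℝ} (hcmin : 0 < cmin)
    (hmin : ∀ k j, j < M.n k → cmin ≤ M.c k j) {t : ℝ} {w : List ℕ} (h : M.IsStopping t w) :
    cmin * t < diam (M.J w) := by
  have hw := h.1
  have h₂ := h.2.2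
  rw [← List.dropLast_append_getLast h.ne_nil] at hw ⊢
  obtain ⟨hw, hlast⟩ := (validFrom_append_singleton M.n).mp hw
  rw [zero_add] at hlast
  rw [M.hratio _ _ hw hlast]
  have ht : 0 ≤ t := diam_nonneg.trans h.2.1
  nlinarith [hmin _ _ hlast]

theorem exists_isStopping_prefix {t : ℝ} {w : List ℕ} (hw : ValidFrom M.n 0 w)
    (hwt : diam (M.J w) ≤ t) (ht : t < diam (M.J [])) : ∃ u, u <+: w ∧ M.IsStopping t u := by
  classical
  have hex : ∃ i, diam (M.J (w.take i)) ≤ t := ⟨w.length, by rwa [List.take_length]⟩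
  set i := Nat.find hex
  have hi0 : i ≠ 0 := fun h0 => by
    have := Nat.find_spec hex
    rw [show Nat.find hex = 0 from h0, List.take_zero] at this
    exact (this.trans_lt ht).false
  have hdrop : (w.take i).dropLast = w.take (i - 1) := by
    rw [List.dropLast_eq_take, List.take_take, List.length_take,
      min_eq_left (Nat.find_le (by rwa [List.take_length]) : i ≤ w.length),
      min_eq_left (Nat.sub_le _ _)]
  refine ⟨w.take i, List.take_prefix _ _, validFrom_of_prefix M.n (List.take_prefix _ _) hw,
    Nat.find_spec hex, ?_⟩
  rw [hdrop]
  exact not_le.mp (Nat.find_min hex (by omega))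

theorem finite_setOf_isStopping {cmin cmax : ℝ} (hcmin : 0 < cmin)
    (hmin : ∀ k j, j < M.n k → cmin ≤ M.c k j) (hcmax : 0 < cmax) (hcmax1 : cmax < 1)
    (hmax : ∀ k j, j < M.n k → M.c k j ≤ cmax) {t : ℝ} (ht : 0 < t) :
    {w | M.IsStopping t w}.Finite := by
  obtain ⟨N, hN⟩ := exists_pow_lt_of_lt_one
    (show 0 < cmin * t / (diam (M.J []) + 1) by positivity) hcmax1
  refine ((range N).biUnion (validWords M.n 0)).finite_toSet.subset fun w hw => ?_
  simp only [coe_biUnion, coe_range, Set.mem_iUnion, Set.mem_Iio, mem_coe, mem_validWords]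
  refine ⟨w.length, ?_, rfl, hw.1⟩
  by_contra! hlen
  have hdiam : diam (M.J w) ≤ cmax ^ N * (diam (M.J []) + 1) := by
    rw [M.diam_J hw.1]
    refine mul_le_mul ((M.wt_le_pow hmax hw.1).trans (pow_le_pow_of_le_one hcmax.le
      hcmax1.le hlen)) (by linarith) diam_nonneg (by positivity)
  rw [lt_div_iff₀ (by positivity)] at hN
  linarith [hw.mul_lt_diam hcmin hmin]

theorem exists_isStopping_mem {cmax : ℝ} (hcmax1 : cmax < 1)
    (hmax : ∀ k j, j < M.n k → M.c k j ≤ cmax) {p : EuclideanSpace ℝ (Fin d)}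
    (hp : p ∈ M.moranSet) {t : ℝ} (ht : 0 < t) (htD : t < diam (M.J [])) :
    ∃ w, M.IsStopping t w ∧ p ∈ M.J w := by
  have hD : 0 < diam (M.J []) := ht.trans htD
  obtain ⟨k, hk⟩ := exists_pow_lt_of_lt_one (div_pos ht hD) hcmax1
  obtain ⟨w, ⟨rfl, hw⟩, hpw⟩ : ∃ w, (w.length = k ∧ ValidFrom M.n 0 w) ∧ p ∈ M.J w := by
    simpa [moranSet] using Set.mem_iInter.mp hp k
  have hwt : diam (M.J w) ≤ t := by
    rw [M.diam_J hw, ← le_div_iff₀ hD]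
    exact (M.wt_le_pow hmax hw).trans hk.le
  obtain ⟨u, hu, hstop⟩ := exists_isStopping_prefix hw hwt htD
  exact ⟨u, hstop, M.J_subset_of_prefix hu hw hpw⟩

/-- A stopping word `u ++ v` at scale `r` has `cmin * r < c_v * diam (J u) ≤ c_v * R`. -/
theorem card_isStopping_extensions_le {cmin cmax : ℝ} (hcmin : 0 < cmin)
    (hmin : ∀ k j, j < M.n k → cmin ≤ M.c k j) (hcmax : 0 < cmax) (hcmax1 : cmax < 1)
    (hmax : ∀ k j, j < M.n k → M.c k j ≤ cmax) (s : ℕ → ℕ → ℝ)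
    (hsol : ∀ k k', k < k' → ∏ i ∈ Ioc k k', ∑ j ∈ range (M.n i), M.c i j ^ s k k' = 1)
    (hspos : ∀ k k', k < k' → 0 < s k k') {s₀ : ℝ} (hs₀ : 0 ≤ s₀) {L : ℕ}
    (hL : ∀ k ℓ, L ≤ ℓ → s k (k + ℓ) ≤ s₀) {ε : ℝ} (hε : 0 < ε) {r R : ℝ} (hr : 0 < r)
    (hR : 0 < R) {u : List ℕ} (hu : M.IsStopping R u) {S : Finset (List ℕ)}
    (hS : ∀ w ∈ S, M.IsStopping r w ∧ u <+: w ∧ w ≠ u) :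
    (S.card : ℝ) ≤ (cmin ^ d)⁻¹ ^ L / (cmax ^ (-ε) - 1) * (cmin * r / R) ^ (-(s₀ + ε)) := by
  obtain ⟨k, hk⟩ := Nat.exists_eq_add_one_of_ne_zero (List.length_pos_iff.mpr hu.ne_nil).ne'
  have hinj : Set.InjOn (List.drop u.length) (S : Set (List ℕ)) := fun w hw w' hw' h => by
    obtain ⟨v, rfl⟩ := (hS w hw).2.1
    obtain ⟨v', rfl⟩ := (hS w' hw').2.1
    simpa using h
  rw [← card_image_of_injOn hinj]
  refine M.card_le_of_lt_wt hcmin hmin hcmax hcmax1 hmax s hsol hspos hs₀ hL hε (k := k)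
    (by positivity) fun v hv => ?_
  obtain ⟨w, hw, rfl⟩ := mem_image.mp hv
  obtain ⟨hw, ⟨v, rfl⟩, hne⟩ := hS w hw
  rw [List.drop_left]
  obtain ⟨-, hv⟩ := (validFrom_append M.n).mp hw.1
  rw [zero_add, hk] at hv
  refine ⟨by rintro rfl; simp at hne, hv, ?_⟩
  have h₁ := hw.mul_lt_diam hcmin hmin
  rw [M.diam_J_append hw.1, hk] at h₁
  rw [div_lt_iff₀ hR]
  nlinarith [hu.2.1, M.wt_nonneg hv]

/-- Each stopping cylinder at scale `R` contains an interior ball of radius comparable to `R`;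
these balls are disjoint and lie in `ball x (3 * R)`, so volume bounds their number. -/
theorem card_isStopping_meeting_le (hd : 1 ≤ d) {cmin : ℝ} (hcmin : 0 < cmin)
    (hmin : ∀ k j, j < M.n k → cmin ≤ M.c k j) {z : EuclideanSpace ℝ (Fin d)} {ρ : ℝ}
    (hρ : 0 < ρ) (hball : ball z ρ ⊆ interior (M.J [])) {x : EuclideanSpace ℝ (Fin d)} {R : ℝ}
    (hR : 0 < R) {T : Finset (List ℕ)}
    (hT : ∀ u ∈ T, M.IsStopping R u ∧ (M.J u ∩ closedBall x R).Nonempty) :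
    (T.card : ℝ) ≤ (3 * diam (M.J []) / (cmin * ρ)) ^ d := by
  have hD := M.diam_J_nil_pos hd
  have hex : ∀ u, ∃ y : EuclideanSpace ℝ (Fin d),
      ValidFrom M.n 0 u → ball y (wt M.c 0 u * ρ) ⊆ interior (M.J u) := fun u => by
    by_cases hu : ValidFrom M.n 0 u
    · exact (M.exists_ball_subset_interior_J hd hball hu).imp fun _ h _ => h
    · exact ⟨0, fun h => absurd h hu⟩
  choose y hy using hex
  set δ := cmin * R * ρ / diam (M.J [])
  have hδ : 0 < δ := by positivity
  have hsub : ∀ u ∈ T, ball (y u) δ ⊆ interior (M.J u) := fun u hu => by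
    have hlt := (hT u hu).1.mul_lt_diam hcmin hmin
    rw [M.diam_J (hT u hu).1.1] at hlt
    refine (ball_subset_ball ?_).trans (hy u (hT u hu).1.1)
    rw [div_le_iff₀ hD]
    nlinarith
  have hdisj : (T : Set (List ℕ)).PairwiseDisjoint fun u => ball (y u) δ :=
    fun u hu v hv huv => Set.disjoint_iff_inter_eq_empty.mpr <| Set.subset_empty_iff.mp <|
      (Set.inter_subset_inter (hsub u hu) (hsub v hv)).trans
        (M.interior_J_inter_interior_J (hT u hu).1.1 (hT v hv).1.1
          ((hT u hu).1.not_prefix (hT v hv).1 huv) ((hT v hv).1.not_prefix (hT u hu).1 huv.symm)).le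
  have hin : ∀ u ∈ T, ball (y u) δ ⊆ ball x (3 * R) := fun u hu p hp => by
    obtain ⟨hstop, q, hqJ, hqx⟩ := hT u hu
    have hpJ := interior_subset (hsub u hu hp)
    have := dist_le_diam_of_mem (M.hcompact u).isBounded hpJ hqJ
    rw [mem_ball]
    linarith [dist_triangle p q x, mem_closedBall.mp hqx, hstop.2.1]
  have hpack := card_mul_pow_le_of_pairwiseDisjoint_ball hδ (by positivity) hdisj hin
  rw [finrank_euclideanSpace_fin, ← le_div_iff₀ (by positivity), ← div_pow] at hpack
  have hratio : 3 * R / δ = 3 * diam (M.J []) / (cmin * ρ) := by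
    simp only [δ]
    field_simp
  rwa [hratio] at hpack

theorem card_isStopping_descendants_le {r R N : ℝ}
    (hN : ∀ u, M.IsStopping R u → ∀ S : Finset (List ℕ),
      (∀ w ∈ S, M.IsStopping r w ∧ u <+: w ∧ w ≠ u) → (S.card : ℝ) ≤ N)
    {u : List ℕ} (hu : M.IsStopping R u) {S : Finset (List ℕ)}
    (hS : ∀ w ∈ S, M.IsStopping r w ∧ u <+: w) : (S.card : ℝ) ≤ 1 + N := by
  classical
  have herase := hN u hu (S.erase u) fun w hw =>
    ⟨(hS w (mem_of_mem_erase hw)).1, (hS w (mem_of_mem_erase hw)).2, ne_of_mem_erase hw⟩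
  have hcard : S.card ≤ (S.erase u).card + 1 := by
    have := pred_card_le_card_erase (s := S) (a := u)
    omega
  have hcard' : (S.card : ℝ) ≤ (S.erase u).card + 1 := by exact_mod_cast hcard
  linarith

/-- Cover by one point of each stopping cylinder at scale `r` meeting the ball; each descends from
one of boundedly many stopping cylinders at scale `R`, which have at most `N` proper descendants. -/
theorem exists_cover_of_card_extensions_le (hd : 1 ≤ d) {cmin cmax : ℝ} (hcmin : 0 < cmin)
    (hmin : ∀ k j, j < M.n k → cmin ≤ M.c k j) (hcmax : 0 < cmax) (hcmax1 : cmax < 1)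
    (hmax : ∀ k j, j < M.n k → M.c k j ≤ cmax) {z : EuclideanSpace ℝ (Fin d)} {ρ : ℝ}
    (hρ : 0 < ρ) (hball : ball z ρ ⊆ interior (M.J [])) {r R : ℝ} (hr : 0 < r) (hrR : r < R)
    (hRD : R < diam (M.J [])) {N : ℝ} (hN0 : 0 ≤ N)
    (hN : ∀ u, M.IsStopping R u → ∀ S : Finset (List ℕ),
      (∀ w ∈ S, M.IsStopping r w ∧ u <+: w ∧ w ≠ u) → (S.card : ℝ) ≤ N)
    (x : EuclideanSpace ℝ (Fin d)) :
    ∃ t : Finset (EuclideanSpace ℝ (Fin d)),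
      (t.card : ℝ) ≤ (3 * diam (M.J []) / (cmin * ρ)) ^ d * (1 + N) ∧
      closedBall x R ∩ M.moranSet ⊆ ⋃ y ∈ t, closedBall y r := by
  classical
  have hR := hr.trans hrR
  have hfin := fun {t : ℝ} (ht : 0 < t) =>
    (finite_setOf_isStopping hcmin hmin hcmax hcmax1 hmax ht).inter_of_left
      {w | (M.J w ∩ closedBall x R).Nonempty}
  set W := (hfin hr).toFinset
  set T := (hfin hR).toFinset
  have hex : ∀ w, ∃ y, ValidFrom M.n 0 w → y ∈ M.J w := fun w => by
    by_cases hw : ValidFrom M.n 0 w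
    · exact (M.J_nonempty hw).imp fun _ h _ => h
    · exact ⟨z, fun h => absurd h hw⟩
  choose y hy using hex
  refine ⟨W.image y, ?_, fun p ⟨hpx, hpE⟩ => ?_⟩
  · have hWT : W ⊆ T.biUnion fun u => W.filter (u <+: ·) := fun w hw => by
      obtain ⟨hstop, p, hpw, hpx⟩ := (hfin hr).mem_toFinset.mp hw
      obtain ⟨u, hu, hstopu⟩ := exists_isStopping_prefix hstop.1 (hstop.2.1.trans hrR.le) hRD
      have hpu := M.J_subset_of_prefix hu hstop.1 hpw
      exact mem_biUnion.mpr ⟨u, (hfin hR).mem_toFinset.mpr ⟨hstopu, p, hpu, hpx⟩,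
        mem_filter.mpr ⟨hw, hu⟩⟩
    have hfiber : ∀ u ∈ T, ((W.filter (u <+: ·)).card : ℝ) ≤ 1 + N := fun u hu =>
      card_isStopping_descendants_le hN ((hfin hR).mem_toFinset.mp hu).1 fun w hw =>
        ⟨((hfin hr).mem_toFinset.mp (mem_filter.mp hw).1).1, (mem_filter.mp hw).2⟩
    have hT := card_isStopping_meeting_le hd hcmin hmin hρ hball hR
      (T := T) fun u hu => (hfin hR).mem_toFinset.mp hu
    calc ((W.image y).card : ℝ) ≤ W.card := by exact_mod_cast card_image_le
      _ ≤ ∑ u ∈ T, ((W.filter (u <+: ·)).card : ℝ) := by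
        exact_mod_cast (Finset.card_le_card hWT).trans card_biUnion_le
      _ ≤ ∑ _u ∈ T, (1 + N) := sum_le_sum hfiber
      _ = T.card * (1 + N) := by rw [sum_const, nsmul_eq_mul]
      _ ≤ (3 * diam (M.J []) / (cmin * ρ)) ^ d * (1 + N) :=
        mul_le_mul_of_nonneg_right hT (by linarith)
  · obtain ⟨w, hstop, hpw⟩ := exists_isStopping_mem hcmax1 hmax hpE hr (hrR.trans hRD)
    have hw : w ∈ W := (hfin hr).mem_toFinset.mpr ⟨hstop, p, hpw, hpx⟩
    refine mem_iUnion₂.mpr ⟨y w, mem_image_of_mem y hw, ?_⟩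
    exact mem_closedBall.mpr ((dist_le_diam_of_mem (M.hcompact w).isBounded hpw
      (hy w hstop.1)).trans hstop.2.1)

theorem coverNum_moranSet_le (hd : 1 ≤ d) {cmin : ℝ} (hcmin : 0 < cmin)
    (hmin : ∀ k j, j < M.n k → cmin ≤ M.c k j) (s : ℕ → ℕ → ℝ)
    (hsol : ∀ k k', k < k' → ∏ i ∈ Ioc k k', ∑ j ∈ range (M.n i), M.c i j ^ s k k' = 1)
    (hspos : ∀ k k', k < k' → 0 < s k k') {s₀ : ℝ} (hs₀ : 0 ≤ s₀) {L : ℕ}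
    (hL : ∀ k ℓ, L ≤ ℓ → s k (k + ℓ) ≤ s₀) {ε : ℝ} (hε : 0 < ε) :
    ∃ C > 0, ∀ r R : ℝ, 0 < r → r < R → R < diam (M.J []) →
      (coverNum M.moranSet r R : ℝ) ≤ C * (R / r) ^ (s₀ + ε) := by
  obtain ⟨cmax, hcmax, hcmax1, hmax⟩ := M.exists_c_le_lt_one hd hcmin hmin
  obtain ⟨z, hz⟩ := M.hint
  obtain ⟨ρ, hρ, hball⟩ := isOpen_iff.mp isOpen_interior z hz
  have hq : 0 < cmax ^ (-ε) - 1 :=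
    sub_pos.mpr (Real.one_lt_rpow_of_pos_of_lt_one_of_neg hcmax hcmax1 (neg_neg_of_pos hε))
  set K := (cmin ^ d)⁻¹ ^ L / (cmax ^ (-ε) - 1)
  set C₁ := (3 * diam (M.J []) / (cmin * ρ)) ^ d
  have hD := M.diam_J_nil_pos hd
  refine ⟨C₁ * (1 + K * cmin ^ (-(s₀ + ε))), by positivity, fun r R hr hrR hRD => ?_⟩
  have hR := hr.trans hrR
  have hRr : 1 ≤ (R / r) ^ (s₀ + ε) :=
    Real.one_le_rpow ((one_le_div hr).mpr hrR.le) (by positivity)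
  have hN : K * (cmin * r / R) ^ (-(s₀ + ε)) = K * cmin ^ (-(s₀ + ε)) * (R / r) ^ (s₀ + ε) := by
    have hrR' : (r / R) ^ (-(s₀ + ε)) = (R / r) ^ (s₀ + ε) := by
      rw [Real.rpow_neg (div_pos hr hR).le, ← Real.inv_rpow (div_pos hr hR).le, inv_div]
    rw [mul_div_assoc, Real.mul_rpow hcmin.le (div_pos hr hR).le, hrR', mul_assoc]
  have hcover : ∀ x ∈ M.moranSet, ∃ t : Finset (EuclideanSpace ℝ (Fin d)),
      t.card ≤ ⌊C₁ * (1 + K * cmin ^ (-(s₀ + ε))) * (R / r) ^ (s₀ + ε)⌋₊ ∧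
      closedBall x R ∩ M.moranSet ⊆ ⋃ y ∈ t, closedBall y r := fun x _ => by
    obtain ⟨t, hcard, ht⟩ := exists_cover_of_card_extensions_le hd hcmin hmin hcmax hcmax1 hmax
      hρ hball hr hrR hRD (by positivity) (fun u hu S hS => card_isStopping_extensions_le hcmin
        hmin hcmax hcmax1 hmax s hsol hspos hs₀ hL hε hr hR hu hS) x
    refine ⟨t, Nat.le_floor (hcard.trans ?_), ht⟩
    rw [hN, mul_assoc C₁]
    gcongr
    nlinarith [show 0 ≤ K * cmin ^ (-(s₀ + ε)) by positivity]
  have hle : coverNum M.moranSet r R ≤ _ := Nat.sInf_le hcover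
  exact (Nat.cast_le.mpr hle).trans (Nat.floor_le (by positivity))

end MoranSystem

/-- upper bound `dim_A E ≤ s**` for Moran sets with `c_* > 0`,
where `s_{k,k'}` solves `∏_{i=k+1}^{k'} ∑_j c_{i,j}^s = 1` and
`s** = lim_m sup_k s_{k,k+m}`. -/
theorem stmt_10 (d : ℕ) (hd : 1 ≤ d) (M : MoranSystem d)
    (cstar : ℝ) (hcstar : 0 < cstar)
    (hlb : ∀ k j, j < M.n k → cstar ≤ M.c k j)
    (s : ℕ → ℕ → ℝ)
    (hsol : ∀ k k', k < k' →
      ∏ i ∈ Finset.Ioc k k', ∑ j ∈ Finset.range (M.n i), (M.c i j) ^ (s k k') = 1)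
    (hspos : ∀ k k', k < k' → 0 < s k k')
    (θ : ℕ → ℝ) (hθ : ∀ m, 1 ≤ m → IsLUB (Set.range fun k => s k (k + m)) (θ m))
    (sStarStar : ℝ)
    (hlim : Filter.Tendsto (fun m => θ (m + 1)) Filter.atTop (nhds sStarStar)) :
    assouadDim M.moranSet ≤ sStarStar := by
  have hs_le_θ : ∀ k m, s k (k + (m + 1)) ≤ θ (m + 1) := fun k m => (hθ _ m.succ_pos).1 ⟨k, rfl⟩
  have hs₀ : 0 ≤ sStarStar :=
    ge_of_tendsto' hlim fun m => (hspos 0 _ (by omega)).le.trans (hs_le_θ 0 m)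
  refine le_of_forall_pos_le_add fun ε hε => ?_
  obtain ⟨N, hN⟩ := Filter.eventually_atTop.mp
    (hlim.eventually (eventually_le_nhds (by linarith : sStarStar < sStarStar + ε / 2)))
  have hL : ∀ k ℓ, N + 1 ≤ ℓ → s k (k + ℓ) ≤ sStarStar + ε / 2 := fun k ℓ hℓ => by
    obtain ⟨m, rfl⟩ : ∃ m, ℓ = m + 1 := ⟨ℓ - 1, by omega⟩
    exact (hs_le_θ k m).trans (hN m (by omega))
  obtain ⟨C, hC, hcover⟩ :=
    MoranSystem.coverNum_moranSet_le hd hcstar hlb s hsol hspos (by positivity) hL (half_pos hε)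
  refine csInf_le ⟨0, fun _ h => h.1⟩ ⟨by positivity, _, C, M.diam_J_nil_pos hd, hC, ?_⟩
  simpa only [add_assoc, add_halves] using hcover
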